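/- Define g_n(s,p) = Σ_{i=1}^{n} [n brack i] (s)_i / p^i. For every n ≥ 1, every real p ≥ 1, and every complex s, one has |g_n(s,p)| ≤ g_n(|s|, p). -/

import Mathlib

open Finset

/-- Unsigned Stirling numbers of the first kind. -/
def stir : ℕ → ℕ → ℕ
  | 0, 0 => 1
  | 0, _ + 1 => 0
  | _ + 1, 0 => 0
  | n + 1, i + 1 => stir n i + n * stir n (i + 1)

/-- `g_n(s,p) = ∑_{i=1}^n [n brack i] (s)_i / p^i` for complex `s`. -/
noncomputable def g (n : ℕ) (s : ℂ) (p : ℝ) : ℂ :=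
  ∑ i ∈ Finset.Icc 1 n, (stir n i : ℂ) * (∏ j ∈ Finset.range i, (s - j)) / (p : ℂ) ^ i

/-- `g_n(s,p)` for real `s`. -/
noncomputable def gR (n : ℕ) (s p : ℝ) : ℝ :=
  ∑ i ∈ Finset.Icc 1 n, (stir n i : ℝ) * (∏ j ∈ Finset.range i, (s - j)) / p ^ i


/-!
Put `x = p - 1 ≥ 0` and `P_n(s, x) = (1 + x)^n g_n(s, 1 + x) = ∑ᵢ [n i] (s)ᵢ (1 + x)^(n-i)`.
The recurrence `[n+1, i+1] = [n, i] + n [n, i+1]` becomes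
`P_{n+1} = (s + n x) P_n + (1 + x) ∂ₓ P_n`, and since `P_0 = 1` this shows that `P_n` has
natural-number coefficients as a polynomial in `s` and `x`. For such a polynomial the triangle
inequality gives `|P_n(s, x)| ≤ P_n(|s|, x)` whenever `x ≥ 0`.
-/

open MvPolynomial

lemma stir_eq_zero_of_lt {n i : ℕ} (h : n < i) : stir n i = 0 := by
  induction n generalizing i with
  | zero => obtain ⟨j, rfl⟩ := Nat.exists_eq_add_of_lt h; rfl
  | succ m ih =>
    obtain ⟨j, rfl⟩ : ∃ j, i = j + 1 := Nat.exists_eq_succ_of_ne_zero (by omega)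
    simp [stir, ih (by omega : m < j), ih (by omega : m < j + 1)]

lemma natCast_mul_stir_zero (R : Type*) [Semiring R] (n : ℕ) : (n : R) * stir n 0 = 0 := by
  cases n <;> simp [stir]

lemma norm_aeval_le {σ A : Type*} [NormedCommRing A] [NormOneClass A]
    (f : σ → A) (P : MvPolynomial σ ℕ) : ‖aeval f P‖ ≤ aeval (fun i => ‖f i‖) P := by
  simp only [aeval_def, eval₂_eq]
  refine (norm_sum_le _ _).trans (sum_le_sum fun d _ => ?_)
  refine (norm_mul_le _ _).trans (mul_le_mul ?_ ?_ (norm_nonneg _) (Nat.cast_nonneg _))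
  · simpa using Nat.norm_cast_le (α := A) (P.coeff d)
  · refine (Finset.norm_prod_le _ _).trans (prod_le_prod (fun _ _ => norm_nonneg _) fun i _ => ?_)
    exact norm_pow_le _ _

section StirlingPoly

local notation "ℤ[s,x]" => MvPolynomial (Fin 2) ℤ
local notation "ℕ[s,x]" => MvPolynomial (Fin 2) ℕ

noncomputable def stirlingTerm (n i : ℕ) : ℤ[s,x] :=
  (∏ j ∈ range i, (X 0 - (j : ℤ[s,x]))) * (1 + X 1) ^ (n - i)

noncomputable def stirlingPoly (n : ℕ) : ℤ[s,x] :=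
  ∑ i ∈ range (n + 1), (stir n i : ℤ[s,x]) * stirlingTerm n i

lemma pderiv_one_prod_X_zero_sub (i : ℕ) :
    pderiv 1 (∏ j ∈ range i, (X 0 - (j : ℤ[s,x]))) = 0 := by
  induction i with
  | zero => simp
  | succ i ih => simp [prod_range_succ, ih]

lemma stirlingTerm_step {n i : ℕ} (h : i ≤ n) :
    (X 0 + (n : ℤ[s,x]) * X 1) * stirlingTerm n i + (1 + X 1) * pderiv 1 (stirlingTerm n i) =
      stirlingTerm (n + 1) (i + 1) + (n : ℤ[s,x]) * stirlingTerm (n + 1) i := by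
  obtain ⟨k, rfl⟩ := Nat.exists_eq_add_of_le h
  have hY : (1 + X 1) * pderiv 1 ((1 + X 1) ^ k) = (k : ℤ[s,x]) * (1 + X 1) ^ k := by
    cases k with
    | zero => simp
    | succ k => simp [Derivation.leibniz_pow]; ring
  simp only [stirlingTerm, pderiv_mul, pderiv_one_prod_X_zero_sub, prod_range_succ,
    show i + k + 1 - (i + 1) = k by omega, show i + k + 1 - i = k + 1 by omega,
    show i + k - i = k by omega]
  push_cast
  linear_combination (∏ j ∈ range i, (X 0 - (j : ℤ[s,x]))) * hY

lemma stirlingPoly_succ (n : ℕ) :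
    stirlingPoly (n + 1) = (X 0 + (n : ℤ[s,x]) * X 1) * stirlingPoly n
      + (1 + X 1) * pderiv 1 (stirlingPoly n) := by
  have hstep :
      (X 0 + (n : ℤ[s,x]) * X 1) * stirlingPoly n + (1 + X 1) * pderiv 1 (stirlingPoly n) =
        ∑ i ∈ range (n + 1), (stir n i : ℤ[s,x]) *
          (stirlingTerm (n + 1) (i + 1) + n * stirlingTerm (n + 1) i) := by
    simp only [stirlingPoly, map_sum, Derivation.leibniz, mul_sum, ← sum_add_distrib]
    refine sum_congr rfl fun i hi => ?_
    rw [← stirlingTerm_step (Nat.lt_succ_iff.mp (mem_range.mp hi))]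
    simp only [smul_eq_mul, Derivation.map_natCast, mul_zero, add_zero]
    ring
  have hshift :
      ∑ i ∈ range (n + 1), (n : ℤ[s,x]) * stir n (i + 1) * stirlingTerm (n + 1) (i + 1) =
        ∑ i ∈ range (n + 1), (n : ℤ[s,x]) * stir n i * stirlingTerm (n + 1) i := by
    calc _ = ∑ i ∈ range (n + 2), (n : ℤ[s,x]) * stir n i * stirlingTerm (n + 1) i := by
          rw [sum_range_succ' _ (n + 1), natCast_mul_stir_zero]; simp
      _ = _ := by rw [sum_range_succ, stir_eq_zero_of_lt n.lt_succ_self]; simp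
  rw [hstep, stirlingPoly, sum_range_succ']
  simp only [stir, Nat.cast_add, Nat.cast_mul, CharP.cast_eq_zero, zero_mul, add_zero, add_mul,
    mul_add, sum_add_distrib, hshift, add_right_inj]
  exact sum_congr rfl fun i _ => by ring

noncomputable def stirlingPolyNat : ℕ → ℕ[s,x]
  | 0 => 1
  | n + 1 =>
    (X 0 + (n : ℕ[s,x]) * X 1) * stirlingPolyNat n + (1 + X 1) * pderiv 1 (stirlingPolyNat n)

lemma map_stirlingPolyNat (n : ℕ) :
    map (algebraMap ℕ ℤ) (stirlingPolyNat n) = stirlingPoly n := by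
  induction n with
  | zero => simp [stirlingPolyNat, stirlingPoly, stirlingTerm, stir]
  | succ n ih => simp [stirlingPolyNat, stirlingPoly_succ, ← ih, pderiv_map]

end StirlingPoly

lemma aeval_stirlingPoly {K : Type*} [Field K] {n : ℕ} (hn : 1 ≤ n) (s : K) {p : K} (hp : p ≠ 0) :
    aeval ![s, p - 1] (stirlingPoly n) =
      p ^ n * ∑ i ∈ Icc 1 n, (stir n i : K) * (∏ j ∈ range i, (s - j)) / p ^ i := by
  have hsub : Icc 1 n ⊆ range (n + 1) := fun i hi => by simp at hi ⊢; omega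
  simp only [stirlingPoly, stirlingTerm, map_sum, map_mul, map_prod, map_sub, map_pow, map_add,
    map_natCast, map_one, aeval_X, Matrix.cons_val_zero, Matrix.cons_val_one,
    Matrix.cons_val_fin_one, add_sub_cancel, mul_sum]
  rw [← sum_subset hsub]
  · refine sum_congr rfl fun i hi => ?_
    rw [pow_sub₀ _ hp (mem_Icc.mp hi).2]
    field_simp
  · intro i hi hi'
    obtain rfl : i = 0 := by simp at hi hi'; omega
    obtain ⟨m, rfl⟩ := Nat.exists_eq_add_of_le' hn
    simp [stir]

theorem stmt_9 (n : ℕ) (hn : 1 ≤ n) (p : ℝ) (hp : 1 ≤ p) (s : ℂ) :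
    ‖g n s p‖ ≤ gR n ‖s‖ p := by
  have hp0 : 0 < p := by linarith
  have hx : ‖(p : ℂ) - 1‖ = p - 1 := by
    rw [← Complex.ofReal_one, ← Complex.ofReal_sub, Complex.norm_real,
      Real.norm_of_nonneg (by linarith)]
  have key : p ^ n * ‖g n s p‖ ≤ p ^ n * gR n ‖s‖ p := by
    calc p ^ n * ‖g n s p‖ = ‖aeval ![s, (p : ℂ) - 1] (stirlingPolyNat n)‖ := by
          rw [← aeval_map_algebraMap ℤ, map_stirlingPolyNat,
            aeval_stirlingPoly hn s (by exact_mod_cast hp0.ne'), norm_mul,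
            norm_pow, Complex.norm_real, Real.norm_of_nonneg hp0.le, g]
      _ ≤ aeval (fun i => ‖![s, (p : ℂ) - 1] i‖) (stirlingPolyNat n) := norm_aeval_le _ _
      _ = p ^ n * gR n ‖s‖ p := by
          rw [gR, ← aeval_stirlingPoly hn _ hp0.ne', ← map_stirlingPolyNat, aeval_map_algebraMap]
          congr 1
          ext i; fin_cases i <;> simp [hx]
  exact le_of_mul_le_mul_left key (pow_pos hp0 n)
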